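/- Let d ≥ 2. Then (1_{d²} − F) * (M ⊗ 1_d) * (1_{d²} − F) = ∑_{i=0}^{d−1} u_i u_iᴴ, where M = Matrix.stdBasisMatrix 0 0 1 ∈ Matrix (Fin d) (Fin d) ℂ (the matrix |0⟩⟨0|), ⊗ is the Kronecker product, and for each i, u_i : Fin d × Fin d → ℂ is the vector with u_i (0,i) = 1, u_i (i,0) = −1 and all other entries 0 (so u_0 is the zero vector, and u_i u_iᴴ = Matrix.vecMulVec u_i (star u_i)). This computes the output of the complementary Werner–Holevo channel Φc(X) = (1/(2(d−1)))·(1 − F)(X ⊗ 1)(1 − F) on the pure state |0⟩⟨0|. -/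

import Mathlib

/-!
Writing `e i` for the basis vector at `(0, i)`, we have `|0⟩⟨0| ⊗ 1 = ∑ i, e i (e i)ᴴ`. The flip is
Hermitian, so conjugating by `1 - F` sends each rank-one term `e i (e i)ᴴ` to `v vᴴ` with
`v = (1 - F) e i = e i - F (e i)`, which is the vector `u i`.
-/

open Matrix

/-- The flip (swap) operator on `ℂ^d ⊗ ℂ^d`. -/
def flipOp (d : ℕ) : Matrix (Fin d × Fin d) (Fin d × Fin d) ℂ :=
  Matrix.of fun p q => if p.1 = q.2 ∧ p.2 = q.1 then 1 else 0

open scoped Kronecker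

namespace Matrix

variable {l m n α : Type*}

theorem single_kronecker_one [Fintype n] [DecidableEq l] [DecidableEq n] [CommSemiring α]
    (a : l) : single a a (1 : α) ⊗ₖ (1 : Matrix n n α) = ∑ i, single (a, i) (a, i) 1 := by
  conv_lhs => rw [← sum_single_one (m := n)]
  exact (map_sum (kroneckerBilinear (R := α) (single a a (1 : α))) _ _).trans
    (Finset.sum_congr rfl fun i _ => (single_kronecker_single a a i i 1 1).trans (by rw [mul_one]))

theorem single_one_eq_vecMulVec_star [DecidableEq m] [Semiring α] [StarRing α] (i : m) :
    single i i (1 : α) = vecMulVec (Pi.single i 1) (star (Pi.single i 1)) := by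
  rw [← Pi.single_star, star_one, single_eq_single_vecMulVec_single]

theorem mul_vecMulVec_star_mul_conjTranspose [Fintype n] [Semiring α] [StarRing α]
    (A : Matrix m n α) (v : n → α) :
    A * vecMulVec v (star v) * Aᴴ = vecMulVec (A *ᵥ v) (star (A *ᵥ v)) := by
  rw [mul_vecMulVec, vecMulVec_mul, star_mulVec]

end Matrix

theorem flipOp_conjTranspose (d : ℕ) : (flipOp d)ᴴ = flipOp d := by
  ext p q
  simp [flipOp, and_comm, eq_comm]

theorem flipOp_mulVec {d : ℕ} (v : Fin d × Fin d → ℂ) : flipOp d *ᵥ v = v ∘ Prod.swap := by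
  ext p
  have swap_iff (q : Fin d × Fin d) : (p.1 = q.2 ∧ p.2 = q.1) ↔ q = p.swap := by
    rw [Prod.ext_iff, Prod.fst_swap, Prod.snd_swap, @eq_comm _ q.1, @eq_comm _ q.2, and_comm]
  simp [flipOp, mulVec, dotProduct, swap_iff]

theorem stmt13 {d : ℕ} (hd : 2 ≤ d)
    (u : Fin d → Fin d × Fin d → ℂ)
    (hu : ∀ i p, u i p =
      (if p = ((⟨0, by omega⟩ : Fin d), i) then 1 else 0) +
      (if p = (i, (⟨0, by omega⟩ : Fin d)) then -1 else 0)) :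
    (1 - flipOp d) *
        Matrix.kroneckerMap (· * ·)
          (Matrix.single (⟨0, by omega⟩ : Fin d) (⟨0, by omega⟩ : Fin d) (1 : ℂ))
          (1 : Matrix (Fin d) (Fin d) ℂ) *
        (1 - flipOp d) =
      ∑ i, Matrix.vecMulVec (u i) (star (u i)) := by
  set z : Fin d := ⟨0, by omega⟩
  have hu_mulVec (i : Fin d) : u i = (1 - flipOp d) *ᵥ Pi.single (z, i) 1 := by
    ext p
    rw [hu, sub_mulVec, one_mulVec, flipOp_mulVec, Pi.sub_apply, Function.comp_apply,
      Pi.single_apply, Pi.single_apply, sub_eq_add_neg]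
    simp only [Prod.swap_eq_iff_eq_swap, Prod.swap_prod_mk, neg_ite, neg_zero]
  have hHermitian : (1 - flipOp d)ᴴ = 1 - flipOp d := by
    rw [conjTranspose_sub, conjTranspose_one, flipOp_conjTranspose]
  calc _ = ∑ i, (1 - flipOp d) * vecMulVec (Pi.single (z, i) 1) (star (Pi.single (z, i) 1)) *
          (1 - flipOp d)ᴴ := by
        rw [single_kronecker_one, hHermitian, Finset.mul_sum, Finset.sum_mul]
        simp_rw [single_one_eq_vecMulVec_star]
    _ = _ := by simp_rw [mul_vecMulVec_star_mul_conjTranspose, hu_mulVec]
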